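/- Let k, d be positive integers with k dividing d and set t = d/k. There exists n₀ = n₀(d,k) such that for every n ≥ n₀, the only k-wise (n−d)-union family 𝒜 of subsets of [n] with |𝒜| = Σ_{i=0}^{t} C(n, i) is the family of all subsets of [n] of size at most t. -/

import Mathlib

/-- A set `Y` is shattered by the family `F` if every subset of `Y`
is the trace of some member of `F` on `Y`. -/
def Shatters {α : Type*} [DecidableEq α] (F : Finset (Finset α)) (Y : Finset α) : Prop :=
  ∀ T ⊆ Y, ∃ S ∈ F, S ∩ Y = T

/-- The VC dimension of a family: the largest cardinality of a shattered set. -/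
noncomputable def vcDim {α : Type*} [DecidableEq α] (F : Finset (Finset α)) : ℕ :=
  sSup {m | ∃ Y : Finset α, Shatters F Y ∧ Y.card = m}

/-- `S₁ △ S₂ △ ⋯ △ S_k` for a `k`-tuple of sets. -/
def symmDiffAll {α : Type*} [DecidableEq α] {k : ℕ} (f : Fin k → Finset α) : Finset α :=
  (List.ofFn f).foldr symmDiff ∅

/-- The `k`-fold symmetric difference family `△𝒜^k`. -/
def symmDiffFam {α : Type*} [DecidableEq α] (k : ℕ) (A : Finset (Finset α)) :
    Finset (Finset α) :=
  (Fintype.piFinset fun _ : Fin k => A).image symmDiffAll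

/-- The family `𝒜₁ △ ⋯ △ 𝒜ₖ`. -/
def symmDiffFamMulti {α : Type*} [DecidableEq α] {k : ℕ} (A : Fin k → Finset (Finset α)) :
    Finset (Finset α) :=
  (Fintype.piFinset A).image symmDiffAll

/-- A family is `k`-wise `(n-d)`-union if any `k` of its members have union of size `≤ d`. -/
def KwiseUnion {α : Type*} [DecidableEq α] (k d : ℕ) (A : Finset (Finset α)) : Prop :=
  ∀ f : Fin k → Finset α, (∀ i, f i ∈ A) → (Finset.univ.sup f).card ≤ d

/-- The `i`-compression of a family. -/
def compress {α : Type*} [DecidableEq α] (i : α) (A : Finset (Finset α)) :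
    Finset (Finset α) :=
  A.image fun S => if S ∈ A ∧ S.erase i ∈ A then S else S.erase i

/-- The `(i,j)`-shift of a family. -/
def shiftIJ {α : Type*} [DecidableEq α] (i j : α) (A : Finset (Finset α)) :
    Finset (Finset α) :=
  A.image fun S => if i ∉ S ∧ j ∈ S ∧ insert i (S.erase j) ∉ A then insert i (S.erase j) else S

/-- `p(n,k,d)`: the maximum size of a `k`-wise `(n-d)`-union family on `[n]`. -/
noncomputable def pMax (n k d : ℕ) : ℕ :=
  sSup {m | ∃ F : Finset (Finset (Fin n)), KwiseUnion k d F ∧ F.card = m}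


/-! If a `k`-wise `(n - k t)`-union family `𝒜` had a member `S` with `|S| > t`, the traces
`T \ S` (`T ∈ 𝒜`) would form a `(k - 1)`-wise family whose unions have fewer than `(k - 1) t`
elements. Splitting off one member in the same way shows, by induction on `k`, that a `k`-wise
family with unions of size `≤ d` has `O(n ^ ⌊d / k⌋)` members; so there are `O(n ^ (t - 1))`
traces, and since a set is determined by its traces inside and outside `S`,
`|𝒜| ≤ 2 ^ (k t) · O(n ^ (t - 1)) < C(n, t)` for large `n`. Hence every member of `𝒜` has at
most `t` elements, and counting forces `𝒜 = {S : |S| ≤ t}`. -/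

open Finset

lemma Finset.card_filter_card_le_eq_sum_choose {α : Type*} [Fintype α] (t : ℕ) :
    #{S : Finset α | S.card ≤ t} = ∑ i ∈ range (t + 1), (Fintype.card α).choose i := by
  classical
  rw [card_eq_sum_card_fiberwise (f := Finset.card) (t := range (t + 1))
    fun S hS => by simpa [Nat.lt_succ_iff] using hS]
  refine sum_congr rfl fun i hi => ?_
  rw [← card_univ, ← card_powersetCard]
  congr 1
  ext S
  simp only [mem_range] at hi
  simp only [mem_filter, mem_univ, true_and, mem_powersetCard, subset_univ]
  exact ⟨And.right, fun h => ⟨by omega, h⟩⟩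

lemma Nat.sum_range_choose_le_mul_pow (n t : ℕ) :
    ∑ i ∈ range (t + 1), n.choose i ≤ (t + 1) * (n + 1) ^ t := by
  calc ∑ i ∈ range (t + 1), n.choose i ≤ ∑ i ∈ range (t + 1), (n + 1) ^ t := by
        refine sum_le_sum fun i hi => ?_
        calc n.choose i ≤ n ^ i := Nat.choose_le_pow n i
          _ ≤ (n + 1) ^ i := Nat.pow_le_pow_left n.le_succ i
          _ ≤ (n + 1) ^ t := Nat.pow_le_pow_right n.succ_pos (Nat.lt_succ_iff.1 (mem_range.1 hi))
    _ = (t + 1) * (n + 1) ^ t := by simp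

lemma Finset.card_le_mul_pow_of_forall_card_le {α : Type*} [Fintype α]
    {A : Finset (Finset α)} {t : ℕ} (hA : ∀ S ∈ A, S.card ≤ t) :
    A.card ≤ (t + 1) * (Fintype.card α + 1) ^ t :=
  calc A.card ≤ #{S : Finset α | S.card ≤ t} :=
        card_le_card fun S hS => mem_filter.2 ⟨mem_univ S, hA S hS⟩
    _ ≤ (t + 1) * (Fintype.card α + 1) ^ t := by
        rw [card_filter_card_le_eq_sum_choose]
        exact Nat.sum_range_choose_le_mul_pow _ t

-- A set is determined by its traces on `S` and outside `S`.
lemma Finset.card_le_two_pow_mul_card_image_sdiff {α : Type*} [DecidableEq α]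
    (A : Finset (Finset α)) (S : Finset α) :
    A.card ≤ 2 ^ S.card * (A.image (· \ S)).card := by
  rw [← card_powerset, ← card_product]
  refine card_le_card_of_injOn (fun T => (T ∩ S, T \ S)) (fun T hT => ?_) fun T₁ _ T₂ _ h => ?_
  · simp only [coe_product, coe_powerset, coe_image, Set.mem_prod, Set.mem_preimage,
      Set.mem_powerset_iff, coe_subset, Set.mem_image, mem_coe]
    exact ⟨inter_subset_right, T, hT, rfl⟩
  · simp only [Prod.mk.injEq] at h
    rw [← sdiff_union_inter T₁ S, ← sdiff_union_inter T₂ S, h.1, h.2]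

namespace KwiseUnion

variable {α : Type*} [DecidableEq α] {k d : ℕ} {A : Finset (Finset α)}

lemma card_le_of_mem (hA : KwiseUnion (k + 1) d A) {S : Finset α} (hS : S ∈ A) : S.card ≤ d := by
  simpa [sup_const univ_nonempty] using hA (fun _ => S) fun _ => hS

lemma mono {d' : ℕ} (hA : KwiseUnion k d A) (hd : d ≤ d') : KwiseUnion k d' A :=
  fun f hf => (hA f hf).trans hd

-- Any `k` traces outside `S`, together with `S` itself, come from `k + 1` members of `A`.
lemma image_sdiff (hA : KwiseUnion (k + 1) d A) {S : Finset α} (hS : S ∈ A) :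
    KwiseUnion k (d - S.card) (A.image (· \ S)) := by
  intro g hg
  choose T hTA hTg using fun i => mem_image.1 (hg i)
  set f : Fin (k + 1) → Finset α := Fin.cons S T
  have hS_le : S ⊆ univ.sup f := le_sup (f := f) (mem_univ 0)
  have hg_le : univ.sup g ⊆ univ.sup f \ S := Finset.sup_le fun i _ =>
    hTg i ▸ sdiff_subset_sdiff (le_sup (f := f) (mem_univ i.succ)) le_rfl
  calc (univ.sup g).card ≤ (univ.sup f \ S).card := card_le_card hg_le
    _ = (univ.sup f).card - S.card := card_sdiff_of_subset hS_le
    _ ≤ d - S.card := Nat.sub_le_sub_right (hA f (Fin.cases hS hTA)) _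

lemma card_le_two_pow_mul_of_mem {c e : ℕ}
    (hc : ∀ B : Finset (Finset α), KwiseUnion k e B → B.card ≤ c)
    (hA : KwiseUnion (k + 1) d A) {S : Finset α} (hS : S ∈ A) (he : d ≤ S.card + e) :
    A.card ≤ 2 ^ d * c :=
  calc A.card ≤ 2 ^ S.card * (A.image (· \ S)).card := card_le_two_pow_mul_card_image_sdiff A S
    _ ≤ 2 ^ d * c := Nat.mul_le_mul (Nat.pow_le_pow_right two_pos (hA.card_le_of_mem hS))
        (hc _ ((hA.image_sdiff hS).mono (by omega)))

end KwiseUnion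

lemma Nat.sub_div_lt_of_lt_mul {d k s : ℕ} (h : d < (k + 2) * s) : (d - s) / (k + 1) < s := by
  have hs : 0 < (k + 1) * s :=
    Nat.mul_pos k.succ_pos (Nat.pos_of_ne_zero (by rintro rfl; simp at h))
  rw [show (k + 2) * s = (k + 1) * s + s by ring] at h
  exact Nat.div_lt_of_lt_mul (by omega)

universe u

lemma KwiseUnion.exists_card_le_mul_pow (k d : ℕ) : ∃ c : ℕ, ∀ (α : Type u) [Fintype α]
    [DecidableEq α] (A : Finset (Finset α)), KwiseUnion (k + 1) d A →
      A.card ≤ c * (Fintype.card α + 1) ^ (d / (k + 1)) := by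
  induction k generalizing d with
  | zero => exact ⟨d + 1, fun α _ _ A hA => by
      simpa using card_le_mul_pow_of_forall_card_le fun S hS => hA.card_le_of_mem hS⟩
  | succ k ih =>
    obtain ⟨t, ht⟩ : ∃ t, t = d / (k + 2) := ⟨_, rfl⟩
    obtain ⟨c, hc⟩ := ih (d - (t + 1))
    refine ⟨(t + 1) + 2 ^ d * c, fun α _ _ A hA => ?_⟩
    rw [← ht]
    by_cases hlarge : ∃ S ∈ A, t < S.card
    · obtain ⟨S, hS, htS⟩ := hlarge
      have hexp : (d - (t + 1)) / (k + 1) ≤ t := Nat.lt_add_one_iff.1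
        (Nat.sub_div_lt_of_lt_mul (ht ▸ Nat.lt_mul_div_succ d (Nat.succ_pos _)))
      calc A.card ≤ 2 ^ d * (c * (Fintype.card α + 1) ^ t) :=
            hA.card_le_two_pow_mul_of_mem (fun B hB => (hc α B hB).trans
              (Nat.mul_le_mul_left c (Nat.pow_le_pow_right (by positivity) hexp))) hS (by omega)
        _ ≤ ((t + 1) + 2 ^ d * c) * (Fintype.card α + 1) ^ t := by
            rw [← mul_assoc]; exact Nat.mul_le_mul_right _ (Nat.le_add_left _ _)
    · push Not at hlarge
      calc A.card ≤ (t + 1) * (Fintype.card α + 1) ^ t := card_le_mul_pow_of_forall_card_le hlarge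
        _ ≤ ((t + 1) + 2 ^ d * c) * (Fintype.card α + 1) ^ t :=
            Nat.mul_le_mul_right _ (Nat.le_add_right _ _)

-- `(t + 1) ^ (t + 1) * n.choose (t + 1) ≥ (n - t) ^ (t + 1)` has higher degree than `(n + 1) ^ t`.
lemma Nat.exists_forall_mul_pow_lt_choose (K t : ℕ) :
    ∃ n₀, ∀ n ≥ n₀, K * (n + 1) ^ t < n.choose (t + 1) := by
  refine ⟨K * 2 ^ t * (t + 1) ^ (t + 1) + 2 * t + 1, fun n hn => ?_⟩
  set m := n + 1 - (t + 1)
  have hchoose : m ^ (t + 1) ≤ (t + 1) ^ (t + 1) * n.choose (t + 1) :=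
    calc m ^ (t + 1) ≤ n.descFactorial (t + 1) := Nat.pow_sub_le_descFactorial n (t + 1)
      _ = Nat.factorial (t + 1) * n.choose (t + 1) :=
          Nat.descFactorial_eq_factorial_mul_choose n (t + 1)
      _ ≤ _ := Nat.mul_le_mul_right _ (Nat.factorial_le_pow (t + 1))
  have hpow : (n + 1) ^ t ≤ 2 ^ t * m ^ t := by
    rw [← mul_pow]; exact Nat.pow_le_pow_left (by omega) t
  refine Nat.lt_of_mul_lt_mul_left (a := (t + 1) ^ (t + 1)) (lt_of_lt_of_le ?_ hchoose)
  calc (t + 1) ^ (t + 1) * (K * (n + 1) ^ t)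
      ≤ (t + 1) ^ (t + 1) * (K * (2 ^ t * m ^ t)) := by gcongr
    _ = (K * 2 ^ t * (t + 1) ^ (t + 1)) * m ^ t := by ring
    _ < m * m ^ t := Nat.mul_lt_mul_of_pos_right (by omega) (pow_pos (by omega) t)
    _ = m ^ (t + 1) := (pow_succ' ..).symm

lemma KwiseUnion.exists_forall_card_le (k t : ℕ) : ∃ n₀ : ℕ, ∀ (α : Type u) [Fintype α]
    [DecidableEq α], n₀ ≤ Fintype.card α → ∀ A : Finset (Finset α),
      KwiseUnion (k + 1) ((k + 1) * t) A → (Fintype.card α).choose t ≤ A.card →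
        ∀ S ∈ A, S.card ≤ t := by
  rcases k with _ | k
  · exact ⟨0, fun α _ _ _ A hA _ S hS => by simpa using hA.card_le_of_mem hS⟩
  rcases t with _ | t
  · exact ⟨0, fun α _ _ _ A hA _ S hS => by simpa using hA.card_le_of_mem hS⟩
  set d := (k + 2) * (t + 1)
  obtain ⟨c, hc⟩ := exists_card_le_mul_pow k (d - 1 - (t + 1))
  obtain ⟨n₀, hn₀⟩ := Nat.exists_forall_mul_pow_lt_choose (2 ^ d * c) t
  refine ⟨n₀, fun α _ _ hn A hA hcard S hS => ?_⟩
  by_contra! hlarge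
  have hexp : (d - 1 - (t + 1)) / (k + 1) ≤ t := Nat.lt_add_one_iff.1
    (Nat.sub_div_lt_of_lt_mul (Nat.sub_one_lt (Nat.mul_ne_zero (by omega) (by omega))))
  have hupper : A.card ≤ 2 ^ d * c * (Fintype.card α + 1) ^ t := by
    rw [mul_assoc]
    exact hA.card_le_two_pow_mul_of_mem (fun B hB => (hc α B hB).trans
      (Nat.mul_le_mul_left c (Nat.pow_le_pow_right (by positivity) hexp))) hS (by omega)
  exact ((hn₀ _ hn).trans_le (hcard.trans hupper)).false

theorem statement9_general (k d : ℕ) (hk : 0 < k) (hkd : k ∣ d) :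
    ∃ n₀ : ℕ, ∀ n : ℕ, n₀ ≤ n → ∀ A : Finset (Finset (Fin n)),
      KwiseUnion k d A → A.card = ∑ i ∈ Finset.range (d / k + 1), n.choose i →
      A = Finset.univ.filter (fun S : Finset (Fin n) => S.card ≤ d / k) := by
  obtain ⟨k, rfl⟩ : ∃ k', k = k' + 1 := ⟨k - 1, by omega⟩
  obtain ⟨t, rfl⟩ := hkd
  rw [Nat.mul_div_cancel_left t hk]
  obtain ⟨n₀, hn₀⟩ := KwiseUnion.exists_forall_card_le k t
  refine ⟨n₀, fun n hn A hA hcard => ?_⟩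
  have hsmall := hn₀ (Fin n) (by simpa using hn) A hA
    (by simpa [hcard] using single_le_sum (fun i _ => Nat.zero_le _) (self_mem_range_succ t))
  refine eq_of_subset_of_card_le (fun S hS => mem_filter.2 ⟨mem_univ S, hsmall S hS⟩) ?_
  rw [card_filter_card_le_eq_sum_choose, Fintype.card_fin, hcard]

/-- for `k ∣ d`, `t = d/k`, there is `n₀(d,k)` such that for `n ≥ n₀` the only
`k`-wise `(n−d)`-union family on `[n]` of size `∑_{i=0}^{t} C(n,i)` is `{S : |S| ≤ t}`. -/
theorem statement9 (k d : ℕ) (hk : 0 < k) (hd : 0 < d) (hkd : k ∣ d) :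
    ∃ n₀ : ℕ, ∀ n : ℕ, n₀ ≤ n → ∀ A : Finset (Finset (Fin n)),
      KwiseUnion k d A → A.card = ∑ i ∈ Finset.range (d / k + 1), n.choose i →
      A = Finset.univ.filter (fun S : Finset (Fin n) => S.card ≤ d / k) :=
  statement9_general k d hk hkd
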